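/- arXiv:cs/0512079 — 3 statements merged into one kernel-verified Lean document; each statement's English description precedes it below -/
import Mathlib

section
/- Let n ≥ 1 and 0 ≤ d ≤ n be integers, x ∈ ℝⁿ and θ ∈ ℝ^d with A := Σ_{i=1}^{d}(x_i − θ_i)² + Σ_{i=d+1}^{n} x_i² > 0, and let c > 0 be any constant (the prior value, independent of τ). Then the function Φ(τ) := −log( f(x|θ,τ) · c / ((n/2)^{1/2} τ^{d/2−1}) ) on (0,∞) attains a unique global minimum at τ* = (n−d+2)/A; equivalently, the invariant MML precision estimator satisfies 1/τ* = (Σ_{i=1}^{d}(x_i−θ_i)² + Σ_{i=d+1}^{n} x_i²)/(n−d+2). -/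
/-!
Up to an additive constant, `Φ(τ) = (A/2) τ - ((n - d + 2)/2) log τ`: the Fisher factor
`τ^{d/2-1}` lowers the exponent of `τ` from `n/2` to `(n - d + 2)/2`. A function `a τ - k log τ`
with `a, k > 0` has its unique minimum on `(0, ∞)` at `k / a`, by `log t < t - 1` for `t ≠ 1`.
-/

open Real

lemma mul_sub_mul_log_lt_of_ne {a k τ : ℝ} (ha : 0 < a) (hk : 0 < k) (hτ : 0 < τ)
    (hne : τ ≠ k / a) : a * (k / a) - k * log (k / a) < a * τ - k * log τ := by
  have hkpa : 0 < k / a := div_pos hk ha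
  have hlog : log (τ / (k / a)) < τ / (k / a) - 1 :=
    log_lt_sub_one_of_pos (div_pos hτ hkpa) (by rwa [Ne, div_eq_one_iff_eq hkpa.ne'])
  rw [log_div hτ.ne' hkpa.ne', div_div_eq_mul_div] at hlog
  have hscaled := mul_lt_mul_of_pos_left hlog hk
  have hcancel : k * (τ * a / k) = a * τ := by field_simp
  rw [mul_div_cancel₀ _ ha.ne']
  linarith

lemma neg_log_gaussian_div_fisher {n d A c τ : ℝ} (hn : 0 < n) (hc : 0 < c) (hτ : 0 < τ) :
    -log ((τ / (2 * π)) ^ (n / 2) * exp (-(τ / 2) * A) * c / (√(n / 2) * τ ^ (d / 2 - 1))) =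
      A / 2 * τ - (n - d + 2) / 2 * log τ +
        (n / 2 * log (2 * π) - log c + log √(n / 2)) := by
  have hsqrt : 0 < √(n / 2) := sqrt_pos.2 (by positivity)
  rw [log_div (by positivity) (by positivity), log_mul (by positivity) hc.ne',
    log_mul hsqrt.ne' (by positivity), log_mul (by positivity) (exp_ne_zero _), log_exp,
    log_rpow (by positivity), log_rpow hτ, log_div hτ.ne' (by positivity)]
  ring

/-- The function `Φ(τ) = −log( f(x|θ,τ) · c / ((n/2)^{1/2} τ^{d/2−1}) )` attains a unique
global minimum on `(0,∞)` at `τ* = (n−d+2)/A`, where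
`A = Σ_{i<d}(x_i−θ_i)² + Σ_{i≥d} x_i² > 0`; equivalently `1/τ* = A/(n−d+2)`. -/
theorem mml_precision_estimator
    (n d : ℕ) (hn : 1 ≤ n) (hdn : d ≤ n)
    (x : Fin n → ℝ) (θ : Fin d → ℝ) (c : ℝ) (hc : 0 < c)
    (A : ℝ)
    (hA : A = ∑ i : Fin n,
      (if h : (i : ℕ) < d then x i - θ ⟨(i : ℕ), h⟩ else x i) ^ 2)
    (hApos : 0 < A)
    (f : ℝ → ℝ)
    (hf : ∀ τ : ℝ, f τ =
      (τ / (2 * Real.pi)) ^ ((n : ℝ) / 2) *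
        Real.exp (-(τ / 2) *
          ∑ i : Fin n, (if h : (i : ℕ) < d then x i - θ ⟨(i : ℕ), h⟩ else x i) ^ 2))
    (Φ : ℝ → ℝ)
    (hΦ : ∀ τ : ℝ, 0 < τ →
      Φ τ = -Real.log (f τ * c / (Real.sqrt ((n : ℝ) / 2) * τ ^ ((d : ℝ) / 2 - 1))))
    (τstar : ℝ) (hτstar : τstar = ((n : ℝ) - (d : ℝ) + 2) / A) :
    0 < τstar ∧
    (∀ τ : ℝ, 0 < τ → τ ≠ τstar → Φ τstar < Φ τ) ∧
    1 / τstar = A / ((n : ℝ) - (d : ℝ) + 2) := by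
  have hk : (0 : ℝ) < n - d + 2 := by
    have : (d : ℝ) ≤ n := by exact_mod_cast hdn
    linarith
  have hτstar_eq : τstar = (n - d + 2) / 2 / (A / 2) := by
    rw [hτstar, div_div_div_cancel_right₀ two_ne_zero]
  have hτstar_pos : 0 < τstar := by rw [hτstar]; positivity
  have hΦ_eq : ∀ τ, 0 < τ → Φ τ = A / 2 * τ - (n - d + 2) / 2 * log τ +
      (n / 2 * log (2 * π) - log c + log √((n : ℝ) / 2)) := fun τ hτ => by
    rw [hΦ τ hτ, hf τ, ← hA, neg_log_gaussian_div_fisher (by exact_mod_cast hn) hc hτ]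
  refine ⟨hτstar_pos, fun τ hτ hne => ?_, by rw [hτstar, one_div_div]⟩
  rw [hΦ_eq τ hτ, hΦ_eq τstar hτstar_pos, add_lt_add_iff_right, hτstar_eq]
  exact mul_sub_mul_log_lt_of_ne (half_pos hApos) (half_pos hk) hτ (hτstar_eq ▸ hne)
end

section
/- Let ν > 0, λ > 0 and let d ≥ 1 be an integer. For the product density π(θ|λ) := ∏_{i=1}^d π_{λ,ν}(θ_i) on ℝ^d, the Fisher information with respect to the scale parameter λ is E(λ) := −∫_{ℝ^d} (∂²/∂λ²) log π(θ|λ) · π(θ|λ) dθ = ν d/(4λ²). -/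
open MeasureTheory

/-- `η(ν) = (Γ(3/ν)/Γ(1/ν))^{1/2}`. -/
noncomputable def ggdEta (ν : ℝ) : ℝ :=
  Real.sqrt (Real.Gamma (3 / ν) / Real.Gamma (1 / ν))

/-- The generalized Gaussian density
`π_{λ,ν}(θ) = (ν η(ν)/(2Γ(1/ν))) λ^{1/2} exp(−(η(ν) λ^{1/2} |θ|)^ν)`. -/
noncomputable def ggd (ν lam θ : ℝ) : ℝ :=
  ν * ggdEta ν / (2 * Real.Gamma (1 / ν)) * Real.sqrt lam *
    Real.exp (-((ggdEta ν * Real.sqrt lam * |θ|) ^ ν))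

/-! Up to a constant, `log π(θ|λ) = (d/2) log λ - η(ν)^ν λ^(ν/2) ∑ᵢ |θᵢ|^ν`, so its second
`λ`-derivative is affine in `∑ᵢ |θᵢ|^ν`. The Gamma integral gives the moment
`E |θᵢ|^ν = 1 / (ν η(ν)^ν λ^(ν/2))`, which cancels the factor `λ^(ν/2)` and leaves
`d/(2λ²) + (ν/2 - 1) d/(2λ²) = ν d/(4λ²)`. -/

open Real Set

theorem integral_exp_neg_mul_abs_rpow {p a : ℝ} (hp : 0 < p) (ha : 0 < a) :
    ∫ x, exp (-(a * |x|) ^ p) = 2 * Gamma (1 / p) / (p * a) := by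
  have hpow (x : ℝ) : (a * |x|) ^ p = a ^ p * |x| ^ p := mul_rpow ha.le (abs_nonneg x)
  have hinv : (a ^ p) ^ (-1 / p) = a⁻¹ := by
    rw [← rpow_mul ha.le, mul_div_cancel₀ _ hp.ne', rpow_neg_one]
  simp_rw [hpow, ← neg_mul]
  rw [integral_comp_abs (f := fun t ↦ exp (-a ^ p * t ^ p)),
    integral_exp_neg_mul_rpow hp (rpow_pos_of_pos ha p), hinv,
    Gamma_add_one (one_div_pos.mpr hp).ne']
  field_simp

theorem integral_abs_rpow_mul_exp_neg_mul_abs_rpow {p a : ℝ} (hp : 0 < p) (ha : 0 < a) :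
    ∫ x, |x| ^ p * exp (-(a * |x|) ^ p) = 2 * Gamma (1 / p) / (p ^ 2 * a ^ (p + 1)) := by
  have hpow (x : ℝ) : (a * |x|) ^ p = a ^ p * |x| ^ p := mul_rpow ha.le (abs_nonneg x)
  have hinv : (a ^ p) ^ (-(p + 1) / p) = (a ^ (p + 1))⁻¹ := by
    rw [← rpow_mul ha.le, mul_div_cancel₀ _ hp.ne', rpow_neg ha.le]
  have hexp : (p + 1) / p = 1 / p + 1 := by field_simp; ring
  simp_rw [hpow, ← neg_mul]
  rw [integral_comp_abs (f := fun t ↦ t ^ p * exp (-a ^ p * t ^ p)),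
    integral_rpow_mul_exp_neg_mul_rpow hp (by linarith) (rpow_pos_of_pos ha p), hinv, hexp,
    Gamma_add_one (one_div_pos.mpr hp).ne']
  field_simp

theorem deriv_deriv_add_mul_log_sub_mul_rpow (K B A p : ℝ) {x : ℝ} (hx : 0 < x) :
    deriv (deriv fun l ↦ K + B * log l - A * l ^ p) x
      = -B / x ^ 2 - A * (p * (p - 1) * x ^ (p - 2)) := by
  have hderiv : deriv (fun l ↦ K + B * log l - A * l ^ p) =ᶠ[nhds x]
      fun l ↦ B * l⁻¹ - A * (p * l ^ (p - 1)) := by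
    filter_upwards [Ioi_mem_nhds hx] with l hl
    exact (((hasDerivAt_log (ne_of_gt hl)).const_mul B).const_add K |>.sub
      ((hasDerivAt_rpow_const (Or.inl (ne_of_gt hl))).const_mul A)).deriv
  rw [hderiv.deriv_eq]
  have := ((hasDerivAt_inv hx.ne').const_mul B).fun_sub
    (((hasDerivAt_rpow_const (p := p - 1) (Or.inl hx.ne')).const_mul p).const_mul A)
  rw [this.deriv, show p - 1 - 1 = p - 2 by ring]
  ring

section ProductDensity

variable {ι : Type*} [Fintype ι] {f g : ℝ → ℝ}

theorem comp_eval_mul_prod_eq_prod_ite [DecidableEq ι] (f g : ℝ → ℝ) (i : ι) (θ : ι → ℝ) :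
    g (θ i) * ∏ j, f (θ j) = ∏ j, (if j = i then fun x ↦ g x * f x else f) (θ j) := by
  have (j : ι) : (if j = i then fun x ↦ g x * f x else f) (θ j)
      = (if j = i then g (θ j) else 1) * f (θ j) := by
    split_ifs <;> simp
  simp only [this, Finset.prod_mul_distrib, Finset.prod_ite_eq', Finset.mem_univ, if_true]

theorem integrable_comp_eval_mul_prod (hf : Integrable f) (hgf : Integrable fun x ↦ g x * f x)
    (i : ι) : Integrable fun θ : ι → ℝ ↦ g (θ i) * ∏ j, f (θ j) := by
  classical
  simp_rw [comp_eval_mul_prod_eq_prod_ite f g i]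
  refine Integrable.fintype_prod fun j ↦ ?_
  split_ifs
  exacts [hgf, hf]

theorem integral_comp_eval_mul_prod (hf : ∫ x, f x = 1) (i : ι) :
    ∫ θ : ι → ℝ, g (θ i) * ∏ j, f (θ j) = ∫ x, g x * f x := by
  classical
  simp_rw [comp_eval_mul_prod_eq_prod_ite f g i]
  rw [integral_fintype_prod_volume_eq_prod]
  simp_rw [apply_ite (fun h : ℝ → ℝ ↦ ∫ x, h x), hf]
  simp

theorem integral_add_mul_sum_comp_eval_mul_prod (hf : Integrable f) (hf_one : ∫ x, f x = 1)
    (hgf : Integrable fun x ↦ g x * f x) (a b : ℝ) :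
    ∫ θ : ι → ℝ, (a + b * ∑ i, g (θ i)) * ∏ j, f (θ j)
      = a + b * Fintype.card ι * ∫ x, g x * f x := by
  have hprod : Integrable fun θ : ι → ℝ ↦ ∏ j, f (θ j) := Integrable.fintype_prod fun _ ↦ hf
  have hsum : Integrable fun θ : ι → ℝ ↦ ∑ i, g (θ i) * ∏ j, f (θ j) :=
    integrable_finsetSum _ fun i _ ↦ integrable_comp_eval_mul_prod hf hgf i
  simp_rw [add_mul, mul_assoc, Finset.sum_mul]
  rw [integral_add (hprod.const_mul a) (hsum.const_mul b), integral_const_mul, integral_const_mul,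
    integral_finsetSum _ fun i _ ↦ integrable_comp_eval_mul_prod hf hgf i,
    integral_fintype_prod_volume_eq_pow, hf_one]
  simp [integral_comp_eval_mul_prod hf_one]

end ProductDensity

section GGD

variable {ν : ℝ}

theorem ggdEta_pos (hν : 0 < ν) : 0 < ggdEta ν :=
  sqrt_pos.mpr (div_pos (Gamma_pos_of_pos (div_pos three_pos hν))
    (Gamma_pos_of_pos (one_div_pos.mpr hν)))

theorem ggdEta_mul_sqrt_rpow (hν : 0 < ν) {lam : ℝ} (hlam : 0 ≤ lam) :
    (ggdEta ν * sqrt lam) ^ ν = ggdEta ν ^ ν * lam ^ (ν / 2) := by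
  rw [mul_rpow (ggdEta_pos hν).le (sqrt_nonneg lam), sqrt_eq_rpow, ← rpow_mul hlam,
    one_div_mul_eq_div]

theorem ggd_eq_mul_exp (ν lam x : ℝ) :
    ggd ν lam x = ν * (ggdEta ν * sqrt lam) / (2 * Gamma (1 / ν))
      * exp (-(ggdEta ν * sqrt lam * |x|) ^ ν) := by
  unfold ggd
  ring

theorem integral_ggd (hν : 0 < ν) {lam : ℝ} (hlam : 0 < lam) : ∫ x, ggd ν lam x = 1 := by
  have hη := ggdEta_pos hν
  have hsqrt := sqrt_pos.mpr hlam
  have ha := mul_pos hη hsqrt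
  simp_rw [ggd_eq_mul_exp]
  rw [integral_const_mul, integral_exp_neg_mul_abs_rpow hν ha]
  have := Gamma_pos_of_pos (one_div_pos.mpr hν)
  field_simp

theorem integral_abs_rpow_mul_ggd (hν : 0 < ν) {lam : ℝ} (hlam : 0 < lam) :
    ∫ x, |x| ^ ν * ggd ν lam x = 1 / (ν * (ggdEta ν ^ ν * lam ^ (ν / 2))) := by
  have hη := ggdEta_pos hν
  have hsqrt := sqrt_pos.mpr hlam
  have ha := mul_pos hη hsqrt
  simp_rw [ggd_eq_mul_exp, mul_left_comm (|_| ^ ν)]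
  rw [integral_const_mul, integral_abs_rpow_mul_exp_neg_mul_abs_rpow hν ha, rpow_add ha, rpow_one,
    ggdEta_mul_sqrt_rpow hν hlam.le]
  have := Gamma_pos_of_pos (one_div_pos.mpr hν)
  have := rpow_pos_of_pos hη ν
  have := rpow_pos_of_pos hlam (ν / 2)
  field_simp

theorem integrable_ggd (hν : 0 < ν) {lam : ℝ} (hlam : 0 < lam) : Integrable (ggd ν lam) :=
  .of_integral_ne_zero (by simp [integral_ggd hν hlam])

theorem integrable_abs_rpow_mul_ggd (hν : 0 < ν) {lam : ℝ} (hlam : 0 < lam) :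
    Integrable fun x ↦ |x| ^ ν * ggd ν lam x := by
  refine .of_integral_ne_zero ?_
  rw [integral_abs_rpow_mul_ggd hν hlam]
  have := rpow_pos_of_pos (ggdEta_pos hν) ν
  have := rpow_pos_of_pos hlam (ν / 2)
  positivity

theorem ggd_pos (hν : 0 < ν) {lam : ℝ} (hlam : 0 < lam) (x : ℝ) : 0 < ggd ν lam x := by
  have := ggdEta_pos hν
  have := Gamma_pos_of_pos (one_div_pos.mpr hν)
  unfold ggd
  positivity

theorem log_ggd (hν : 0 < ν) {lam : ℝ} (hlam : 0 < lam) (x : ℝ) :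
    log (ggd ν lam x) = log (ν * ggdEta ν / (2 * Gamma (1 / ν))) + 1 / 2 * log lam
      - ggdEta ν ^ ν * lam ^ (ν / 2) * |x| ^ ν := by
  have hc : 0 < ν * ggdEta ν / (2 * Gamma (1 / ν)) :=
    div_pos (mul_pos hν (ggdEta_pos hν)) (mul_pos two_pos (Gamma_pos_of_pos (one_div_pos.mpr hν)))
  have hsqrt := sqrt_pos.mpr hlam
  rw [ggd, log_mul (mul_pos hc hsqrt).ne' (exp_pos _).ne', log_mul hc.ne' hsqrt.ne', log_exp,
    log_sqrt hlam.le, mul_rpow (mul_nonneg (ggdEta_pos hν).le hsqrt.le) (abs_nonneg x),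
    ggdEta_mul_sqrt_rpow hν hlam.le]
  ring

theorem log_prod_ggd (hν : 0 < ν) {lam : ℝ} (hlam : 0 < lam) {ι : Type*} [Fintype ι]
    (θ : ι → ℝ) :
    log (∏ i, ggd ν lam (θ i)) = Fintype.card ι * log (ν * ggdEta ν / (2 * Gamma (1 / ν)))
      + Fintype.card ι / 2 * log lam - (ggdEta ν ^ ν * ∑ i, |θ i| ^ ν) * lam ^ (ν / 2) := by
  rw [log_prod fun i _ ↦ (ggd_pos hν hlam (θ i)).ne']
  simp_rw [log_ggd hν hlam, Finset.sum_sub_distrib, Finset.sum_add_distrib, Finset.sum_const,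
    ← Finset.mul_sum, Finset.card_univ, nsmul_eq_mul]
  ring

theorem deriv_deriv_log_prod_ggd (hν : 0 < ν) {lam : ℝ} (hlam : 0 < lam) {ι : Type*}
    [Fintype ι] (θ : ι → ℝ) :
    deriv (deriv fun l ↦ log (∏ i, ggd ν l (θ i))) lam
      = -(Fintype.card ι / 2) / lam ^ 2
        - (ggdEta ν ^ ν * ∑ i, |θ i| ^ ν) * (ν / 2 * (ν / 2 - 1) * lam ^ (ν / 2 - 2)) := by
  have hlog : (fun l ↦ log (∏ i, ggd ν l (θ i))) =ᶠ[nhds lam] fun l ↦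
      Fintype.card ι * log (ν * ggdEta ν / (2 * Gamma (1 / ν))) + Fintype.card ι / 2 * log l
        - (ggdEta ν ^ ν * ∑ i, |θ i| ^ ν) * l ^ (ν / 2) := by
    filter_upwards [Ioi_mem_nhds hlam] with l hl
    exact log_prod_ggd hν hl θ
  rw [hlog.deriv.deriv_eq, deriv_deriv_add_mul_log_sub_mul_rpow _ _ _ _ hlam]

end GGD

theorem ggd_scale_fisher_information_general
    (ν lam : ℝ) (hν : 0 < ν) (hlam : 0 < lam) (d : ℕ) :
    -(∫ θ : Fin d → ℝ,
        deriv (deriv (fun l : ℝ => Real.log (∏ i, ggd ν l (θ i)))) lam *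
          ∏ i, ggd ν lam (θ i)) = ν * (d : ℝ) / (4 * lam ^ 2) := by
  have hderiv2 (θ : Fin d → ℝ) : deriv (deriv fun l ↦ log (∏ i, ggd ν l (θ i))) lam
      = -(d / 2) / lam ^ 2
        + -(ggdEta ν ^ ν * (ν / 2 * (ν / 2 - 1) * lam ^ (ν / 2 - 2))) * ∑ i, |θ i| ^ ν := by
    rw [deriv_deriv_log_prod_ggd hν hlam, Fintype.card_fin]
    ring
  simp_rw [hderiv2]
  rw [integral_add_mul_sum_comp_eval_mul_prod (integrable_ggd hν hlam) (integral_ggd hν hlam)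
    (integrable_abs_rpow_mul_ggd hν hlam), integral_abs_rpow_mul_ggd hν hlam, Fintype.card_fin,
    show ν / 2 - 2 = ν / 2 + (-2 : ℤ) by push_cast; ring, rpow_add hlam, rpow_intCast]
  have := rpow_pos_of_pos (ggdEta_pos hν) ν
  have := rpow_pos_of_pos hlam (ν / 2)
  field_simp
  ring

/-- The Fisher information of the product GGD `π(θ|λ) = ∏ᵢ π_{λ,ν}(θᵢ)` with respect to the
scale parameter `λ` equals `ν d/(4λ²)`:
`E(λ) = −∫_{ℝ^d} (∂²/∂λ²) log π(θ|λ) · π(θ|λ) dθ = ν d/(4λ²)`. -/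
theorem ggd_scale_fisher_information
    (ν lam : ℝ) (hν : 0 < ν) (hlam : 0 < lam) (d : ℕ) (hd : 1 ≤ d) :
    -(∫ θ : Fin d → ℝ,
        deriv (deriv (fun l : ℝ => Real.log (∏ i, ggd ν l (θ i)))) lam *
          ∏ i, ggd ν lam (θ i)) = ν * (d : ℝ) / (4 * lam ^ 2) :=
  ggd_scale_fisher_information_general ν lam hν hlam d
end

section
/- Let 0 < ν < 1 and x ∈ ℝ, and let h_x(θ) := (x − θ)² + |θ|^ν. If θ* ∈ ℝ is a global minimizer of h_x over ℝ, then either θ* = 0 or |θ*| ≥ (ν(1−ν)/2)^{1/(2−ν)}. In particular, nonzero values of the GGD-MAP estimator are bounded away from zero by a positive constant depending only on ν. -/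
/-!
Compare the minimizer `θ` with the two competitors `0` and `2θ`, whose average is `θ`: since
`x² + (x - 2θ)² = 2(x - θ)² + 2θ²`, minimality gives `(2 - 2^ν)|θ|^ν ≤ 2θ²`. Bernoulli's
inequality `2^ν ≤ 1 + ν` turns this into `(1 - ν)/2 ≤ |θ|^(2-ν)` whenever `θ ≠ 0`.
-/

open Real

lemma two_rpow_le_one_add {ν : ℝ} (h0 : 0 ≤ ν) (h1 : ν ≤ 1) : (2 : ℝ) ^ ν ≤ 1 + ν := by
  simpa [one_add_one_eq_two] using rpow_one_add_le_one_add_mul_self (s := 1) (by norm_num) h0 h1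

lemma two_mul_penalty_le_of_minimizer {f : ℝ → ℝ} {x θ : ℝ}
    (hmin : ∀ t, (x - θ) ^ 2 + f θ ≤ (x - t) ^ 2 + f t) :
    2 * f θ ≤ f 0 + f (2 * θ) + 2 * θ ^ 2 := by
  linarith [hmin 0, hmin (2 * θ)]

lemma rpow_one_div_le_abs_of_mul_rpow_le_sq {ν c θ : ℝ} (hν : ν < 2) (hc : 0 ≤ c) (hθ : θ ≠ 0)
    (h : c * |θ| ^ ν ≤ θ ^ 2) : c ^ (1 / (2 - ν)) ≤ |θ| := by
  have hpos : 0 < |θ| := abs_pos.mpr hθ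
  have hsplit : θ ^ 2 = |θ| ^ (2 - ν) * |θ| ^ ν := by
    rw [← rpow_add hpos, sub_add_cancel, rpow_two, sq_abs]
  have hc_le : c ≤ |θ| ^ (2 - ν) := by
    rw [hsplit] at h
    exact le_of_mul_le_mul_right h (rpow_pos_of_pos hpos ν)
  rw [one_div, rpow_inv_le_iff_of_pos hc hpos.le (by linarith)]
  exact hc_le

lemma one_sub_div_two_mul_abs_rpow_le_sq_of_minimizer {ν x θ : ℝ} (h0 : 0 < ν) (h1 : ν < 1)
    (hmin : ∀ t : ℝ, (x - θ) ^ 2 + |θ| ^ ν ≤ (x - t) ^ 2 + |t| ^ ν) :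
    (1 - ν) / 2 * |θ| ^ ν ≤ θ ^ 2 := by
  have hcmp := two_mul_penalty_le_of_minimizer (f := fun t => |t| ^ ν) hmin
  simp only [abs_zero, zero_rpow h0.ne', abs_mul, abs_two,
    mul_rpow zero_le_two (abs_nonneg θ)] at hcmp
  have hbern := two_rpow_le_one_add h0.le h1.le
  nlinarith [rpow_nonneg (abs_nonneg θ) ν]

/-- Nonzero global minimizers of `h_x(θ) = (x−θ)² + |θ|^ν` with `0 < ν < 1` are bounded
away from zero: if `θ*` is a global minimizer then `θ* = 0` or
`|θ*| ≥ (ν(1−ν)/2)^{1/(2−ν)}`. -/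
theorem ggd_map_minimizer_bounded_away_from_zero
    (ν x : ℝ) (h1 : 0 < ν) (h2 : ν < 1) (θstar : ℝ)
    (hmin : ∀ t : ℝ, (x - θstar) ^ 2 + |θstar| ^ ν ≤ (x - t) ^ 2 + |t| ^ ν) :
    θstar = 0 ∨ (ν * (1 - ν) / 2) ^ (1 / (2 - ν)) ≤ |θstar| := by
  rcases eq_or_ne θstar 0 with h0 | h0
  · exact Or.inl h0
  right
  have hbound := one_sub_div_two_mul_abs_rpow_le_sq_of_minimizer h1 h2 hmin
  have hconst : ν * (1 - ν) / 2 ≤ (1 - ν) / 2 := by nlinarith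
  refine rpow_one_div_le_abs_of_mul_rpow_le_sq (by linarith) (by nlinarith) h0 ?_
  calc ν * (1 - ν) / 2 * |θstar| ^ ν ≤ (1 - ν) / 2 * |θstar| ^ ν :=
        mul_le_mul_of_nonneg_right hconst (rpow_nonneg (abs_nonneg θstar) ν)
    _ ≤ θstar ^ 2 := hbound
end
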